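/- arXiv:2104.10427 — 3 statements merged into one kernel-verified Lean document; each statement's English description precedes it below -/
import Mathlib

section
/- A weighted Gaussian F(x) = (λ/√(2πσ)) exp(−(x+c)²/(2σ)) is a solution of (σ²/2)F'' + cσF' + (1 − x²/2 − ∫F)F = 0 if and only if λ = 1 − c²/2 − σ/2. -/
open Real

noncomputable def scaledGaussian (a c σ x : ℝ) : ℝ :=
  a * exp (-(x + c) ^ 2 / (2 * σ))

section scaledGaussian

variable (a c σ : ℝ)

theorem hasDerivAt_scaledGaussian (x : ℝ) :
    HasDerivAt (scaledGaussian a c σ) (-(x + c) / σ * scaledGaussian a c σ x) x := by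
  have hexponent : HasDerivAt (fun x : ℝ => -(x + c) ^ 2 / (2 * σ)) (-(x + c) / σ) x := by
    refine ((((hasDerivAt_id x).add_const c).pow 2).neg.div_const (2 * σ)).congr_deriv ?_
    simp only [id, Nat.cast_ofNat, mul_one]
    ring
  refine (hexponent.exp.const_mul a).congr_deriv ?_
  rw [scaledGaussian]
  ring

theorem deriv_scaledGaussian :
    deriv (scaledGaussian a c σ) = fun x => -(x + c) / σ * scaledGaussian a c σ x :=
  funext fun x => (hasDerivAt_scaledGaussian a c σ x).deriv

theorem deriv_deriv_scaledGaussian (x : ℝ) :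
    deriv (deriv (scaledGaussian a c σ)) x
      = (((x + c) / σ) ^ 2 - 1 / σ) * scaledGaussian a c σ x := by
  rw [deriv_scaledGaussian]
  have hlinear : HasDerivAt (fun x : ℝ => -(x + c) / σ) (-(1 / σ)) x := by
    refine (((hasDerivAt_id x).add_const c).neg.div_const σ).congr_deriv ?_
    ring
  refine ((hlinear.mul (hasDerivAt_scaledGaussian a c σ x)).congr_deriv ?_).deriv
  ring

/-- The drift `cσ F'` cancels the `x`-dependent part of `(σ²/2) F''` against the potential `x²/2`. -/
theorem stationary_operator_scaledGaussian (hσ : σ ≠ 0) (lam x : ℝ) :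
    σ ^ 2 / 2 * deriv (deriv (scaledGaussian a c σ)) x
        + c * σ * deriv (scaledGaussian a c σ) x
        + (1 - x ^ 2 / 2 - lam) * scaledGaussian a c σ x
      = (1 - c ^ 2 / 2 - σ / 2 - lam) * scaledGaussian a c σ x := by
  rw [deriv_deriv_scaledGaussian, deriv_scaledGaussian]
  field_simp
  ring

theorem scaledGaussian_pos {a : ℝ} (ha : 0 < a) (x : ℝ) : 0 < scaledGaussian a c σ x := by
  unfold scaledGaussian
  positivity

end scaledGaussian

theorem stationary_iff_lambda (σ c : ℝ) (hσ : 0 < σ)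
    (lam : ℝ) (hlam_pos : 0 < lam)
    (F : ℝ → ℝ)
    (hF : ∀ x, F x = lam / Real.sqrt (2 * π * σ) * Real.exp (-(x + c) ^ 2 / (2 * σ))) :
    (∀ x : ℝ,
        σ ^ 2 / 2 * deriv (deriv F) x + c * σ * deriv F x
          + (1 - x ^ 2 / 2 - lam) * F x = 0)
      ↔ lam = 1 - c ^ 2 / 2 - σ / 2 := by
  obtain rfl : F = scaledGaussian (lam / sqrt (2 * π * σ)) c σ := funext hF
  have hpos := scaledGaussian_pos c σ (by positivity : 0 < lam / sqrt (2 * π * σ))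
  simp only [stationary_operator_scaledGaussian _ _ _ hσ.ne', mul_eq_zero, (hpos _).ne', or_false,
    forall_const]
  constructor <;> intro h <;> linarith
end

section
/- The function m defined by m_t(x) = √(1+tanh(σt)) · exp(−((x + e^{−σt}c)²/(2σ))(1+tanh(σt)) + (x+c)²/(2σ)) is a classical solution of the PDE ∂_t m = (σ²/2)∂²_{xx} m − σc ∂_x m + (1 − x²/2 − λ) m with initial condition m_0(x) = 1 for all x, where λ = 1 − c²/2 − σ/2. -/
/-! Write `m t x = √S · exp φ` with `S t = 1 + tanh (σ t)`. Since `S` solves the logistic equation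
`S' = σ S (2 - S)`, the factor `√S` has logarithmic derivative `σ (2 - S) / 2`, and since `φ` is
quadratic in `x`, `∂ₓ m = φₓ m` and `∂ₓₓ m = (φₓ² + φₓₓ) m`. After dividing by `m`, the equation
becomes a polynomial identity in `x`, `c`, `σ⁻¹`, `e^{-σt}` and `tanh (σ t)`. -/

open Real

theorem Real.hasDerivAt_tanh (x : ℝ) : HasDerivAt tanh (1 - tanh x ^ 2) x := by
  have hcosh := (cosh_pos x).ne'
  have h := (hasDerivAt_sinh x).fun_div (hasDerivAt_cosh x) hcosh
  rw [← funext tanh_eq_sinh_div_cosh] at h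
  refine h.congr_deriv ?_
  rw [tanh_eq_sinh_div_cosh]
  field_simp

lemma one_add_tanh_pos (x : ℝ) : 0 < 1 + tanh x := by
  linarith [neg_one_lt_tanh x]

lemma hasDerivAt_one_add_tanh_mul (σ t : ℝ) :
    HasDerivAt (fun s => 1 + tanh (σ * s)) (σ * (1 - tanh (σ * t)) * (1 + tanh (σ * t))) t :=
  (((hasDerivAt_tanh (σ * t)).comp t ((hasDerivAt_id t).const_mul σ)).const_add 1).congr_deriv
    (by ring)

lemma hasDerivAt_sqrt_one_add_tanh_mul (σ t : ℝ) :
    HasDerivAt (fun s => √(1 + tanh (σ * s)))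
      (σ * (1 - tanh (σ * t)) / 2 * √(1 + tanh (σ * t))) t := by
  have hS := one_add_tanh_pos (σ * t)
  refine ((hasDerivAt_one_add_tanh_mul σ t).sqrt hS.ne').congr_deriv ?_
  have hsqrt := (sqrt_pos.mpr hS).ne'
  field_simp
  rw [sq_sqrt hS.le]

lemma hasDerivAt_deriv_const_mul_exp {φ φ' : ℝ → ℝ} {φ'' : ℝ} (K : ℝ) {x : ℝ}
    (hφ : ∀ y, HasDerivAt φ (φ' y) y) (hφ' : HasDerivAt φ' φ'' x) :
    HasDerivAt (deriv fun y => K * exp (φ y)) (K * exp (φ x) * (φ' x ^ 2 + φ'')) x := by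
  have hderiv : deriv (fun y => K * exp (φ y)) = fun y => K * exp (φ y) * φ' y :=
    funext fun y => ((hφ y).exp.const_mul K).deriv.trans (mul_assoc _ _ _).symm
  rw [hderiv]
  exact (((hφ x).exp.const_mul K).fun_mul hφ').congr_deriv (by ring)

noncomputable def tanhGaussianExponent (σ c t x : ℝ) : ℝ :=
  -((x + exp (-σ * t) * c) ^ 2 / (2 * σ)) * (1 + tanh (σ * t)) + (x + c) ^ 2 / (2 * σ)

noncomputable def tanhGaussian (σ c t x : ℝ) : ℝ :=
  √(1 + tanh (σ * t)) * exp (tanhGaussianExponent σ c t x)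

section

variable (σ c t x : ℝ)

lemma hasDerivAt_tanhGaussianExponent_space :
    HasDerivAt (tanhGaussianExponent σ c t)
      ((x + c - (x + exp (-σ * t) * c) * (1 + tanh (σ * t))) / σ) x := by
  have hsq (b : ℝ) : HasDerivAt (fun y => (y + b) ^ 2 / (2 * σ)) ((x + b) / σ) x :=
    ((((hasDerivAt_id' x).add_const b).fun_pow 2).div_const _).congr_deriv (by push_cast; ring)
  exact (((hsq _).neg.mul_const _).add (hsq c)).congr_deriv (by ring)

lemma deriv_tanhGaussian_space :
    deriv (tanhGaussian σ c t) x = tanhGaussian σ c t x *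
      ((x + c - (x + exp (-σ * t) * c) * (1 + tanh (σ * t))) / σ) :=
  ((hasDerivAt_tanhGaussianExponent_space σ c t x).exp.const_mul _).deriv.trans
    (mul_assoc _ _ _).symm

lemma deriv_deriv_tanhGaussian_space :
    deriv (deriv (tanhGaussian σ c t)) x = tanhGaussian σ c t x *
      (((x + c - (x + exp (-σ * t) * c) * (1 + tanh (σ * t))) / σ) ^ 2 - tanh (σ * t) / σ) := by
  have hslope : HasDerivAt (fun y => (y + c - (y + exp (-σ * t) * c) * (1 + tanh (σ * t))) / σ)
      (-tanh (σ * t) / σ) x :=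
    ((((hasDerivAt_id' x).add_const c).sub (((hasDerivAt_id' x).add_const _).mul_const _)).div_const
      σ).congr_deriv (by ring)
  exact ((hasDerivAt_deriv_const_mul_exp _ (hasDerivAt_tanhGaussianExponent_space σ c t)
    hslope).deriv).trans (by rw [tanhGaussian, mul_assoc]; ring)

end

lemma hasDerivAt_tanhGaussianExponent_time {σ : ℝ} (hσ : σ ≠ 0) (c t x : ℝ) :
    HasDerivAt (fun s => tanhGaussianExponent σ c s x)
      ((x + exp (-σ * t) * c) * (1 + tanh (σ * t)) *
        (exp (-σ * t) * c - (x + exp (-σ * t) * c) * (1 - tanh (σ * t)) / 2)) t := by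
  have hexp : HasDerivAt (fun s => exp (-σ * s)) (-σ * exp (-σ * t)) t :=
    ((hasDerivAt_id' t).const_mul (-σ)).exp.congr_deriv (by ring)
  have hsq := ((((hexp.mul_const c).const_add x).fun_pow 2).div_const (2 * σ)).fun_neg
  have := (hsq.fun_mul (hasDerivAt_one_add_tanh_mul σ t)).add_const ((x + c) ^ 2 / (2 * σ))
  exact this.congr_deriv (by field_simp; ring)

lemma hasDerivAt_tanhGaussian_time {σ : ℝ} (hσ : σ ≠ 0) (c t x : ℝ) :
    HasDerivAt (fun s => tanhGaussian σ c s x) (tanhGaussian σ c t x *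
      (σ * (1 - tanh (σ * t)) / 2 + (x + exp (-σ * t) * c) * (1 + tanh (σ * t)) *
        (exp (-σ * t) * c - (x + exp (-σ * t) * c) * (1 - tanh (σ * t)) / 2))) t :=
  ((hasDerivAt_sqrt_one_add_tanh_mul σ t).fun_mul
    (hasDerivAt_tanhGaussianExponent_time hσ c t x).exp).congr_deriv (by rw [tanhGaussian]; ring)

theorem m_solves_pde (σ c : ℝ) (hσ : 0 < σ)
    (lam : ℝ) (hlam : lam = 1 - c ^ 2 / 2 - σ / 2)
    (m : ℝ → ℝ → ℝ)
    (hm : ∀ t x, m t x =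
      Real.sqrt (1 + Real.tanh (σ * t)) *
        Real.exp (-((x + Real.exp (-σ * t) * c) ^ 2 / (2 * σ)) * (1 + Real.tanh (σ * t))
          + (x + c) ^ 2 / (2 * σ))) :
    (∀ t x : ℝ, 0 ≤ t →
      deriv (fun s => m s x) t =
        σ ^ 2 / 2 * deriv (deriv (m t)) x - σ * c * deriv (m t) x
          + (1 - x ^ 2 / 2 - lam) * m t x)
    ∧ (∀ x : ℝ, m 0 x = 1) := by
  obtain rfl : m = tanhGaussian σ c := funext fun t => funext (hm t)
  subst hlam
  refine ⟨fun t x _ => ?_, fun x => by simp [tanhGaussian, tanhGaussianExponent]⟩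
  rw [(hasDerivAt_tanhGaussian_time hσ.ne' c t x).deriv, deriv_deriv_tanhGaussian_space,
    deriv_tanhGaussian_space]
  field_simp
  ring
end

section
/- If Y₀ ∼ N(−c e^{−σT}, σ/(1+tanh(σT))) and Y_t = (cosh(σ(T−t))/cosh(σT)) Y₀ + c cosh(σ(T−t))(tanh(σ(T−t)) − tanh(σT)) + G where G is an independent centered Gaussian with variance σ² cosh²(σ(T−t)) ∫_0^t ds/cosh²(σ(T−s)), then Y_t ∼ N(−c e^{−σ(T−t)}, σ/(1+tanh(σ(T−t)))). -/
/-!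
Write `S = σ T` and `u = σ (T - t)`. Since `exp (-x) = cosh x (1 - tanh x)` and
`1 / (1 + tanh x) = cosh² x (1 - tanh x)`, the law of `Y₀` is
`N(-c cosh S (1 - tanh S), σ cosh² S (1 - tanh S))`, and since `tanh' = 1 / cosh²` the variance of `G`
is `σ cosh² u (tanh S - tanh u)`. An affine image of a Gaussian plus an independent Gaussian is
Gaussian, and its mean and variance telescope to `-c cosh u (1 - tanh u)` and
`σ cosh² u (1 - tanh u)`.
-/

open Real MeasureTheory ProbabilityTheory
open scoped NNReal

namespace Real

lemma hasDerivAt_tanh_s15 (x : ℝ) : HasDerivAt tanh (1 / cosh x ^ 2) x := by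
  have h := (hasDerivAt_sinh x).div (hasDerivAt_cosh x) (cosh_pos x).ne'
  rw [show sinh / cosh = tanh from funext fun y => (tanh_eq_sinh_div_cosh y).symm] at h
  refine h.congr_deriv ?_
  rw [← cosh_sq_sub_sinh_sq x]
  ring

lemma integral_one_div_cosh_sq (a b : ℝ) : ∫ x in a..b, 1 / cosh x ^ 2 = tanh b - tanh a :=
  intervalIntegral.integral_eq_sub_of_hasDerivAt (fun x _ => hasDerivAt_tanh_s15 x)
    ((continuous_const.div (continuous_cosh.pow 2) fun x =>
      pow_ne_zero 2 (cosh_pos x).ne').intervalIntegrable a b)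

lemma one_add_tanh (x : ℝ) : 1 + tanh x = exp x / cosh x := by
  rw [tanh_eq_sinh_div_cosh, ← cosh_add_sinh]
  field_simp [(cosh_pos x).ne']

lemma exp_neg_eq_cosh_mul_one_sub_tanh (x : ℝ) : exp (-x) = cosh x * (1 - tanh x) := by
  rw [tanh_eq_sinh_div_cosh, ← cosh_sub_sinh]
  field_simp [(cosh_pos x).ne']

lemma div_one_add_tanh (a x : ℝ) : a / (1 + tanh x) = a * cosh x ^ 2 * (1 - tanh x) := by
  rw [one_add_tanh, div_div_eq_mul_div, div_eq_mul_inv, ← exp_neg,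
    exp_neg_eq_cosh_mul_one_sub_tanh]
  ring

lemma div_one_add_tanh_nonneg {a : ℝ} (ha : 0 ≤ a) (x : ℝ) : 0 ≤ a / (1 + tanh x) := by
  rw [div_one_add_tanh]
  exact mul_nonneg (by positivity) (sub_nonneg.2 (tanh_lt_one x).le)

end Real

lemma integral_one_div_cosh_sq_mul_sub {σ : ℝ} (hσ : σ ≠ 0) (T a b : ℝ) :
    ∫ s in a..b, 1 / cosh (σ * (T - s)) ^ 2 = (tanh (σ * (T - a)) - tanh (σ * (T - b))) / σ := by
  simp_rw [mul_sub]
  rw [intervalIntegral.integral_comp_sub_mul (fun x => 1 / cosh x ^ 2) hσ,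
    integral_one_div_cosh_sq, smul_eq_mul]
  field_simp

namespace ProbabilityTheory

lemma IndepFun.map_affine_add_eq_gaussianReal {Ω : Type*} {mΩ : MeasurableSpace Ω}
    {P : Measure Ω} {X Y : Ω → ℝ} (hXY : IndepFun X Y P) {m₁ m₂ : ℝ} {v₁ v₂ : ℝ≥0}
    (hX : P.map X = gaussianReal m₁ v₁) (hY : P.map Y = gaussianReal m₂ v₂) (a b : ℝ) :
    P.map (fun ω => a * X ω + b + Y ω)
      = gaussianReal (a * m₁ + b + m₂) (.mk (a ^ 2) (sq_nonneg a) * v₁ + v₂) := by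
  have hX_law : HasLaw X (gaussianReal m₁ v₁) P :=
    ⟨AEMeasurable.of_map_ne_zero (by simp [hX, NeZero.ne]), hX⟩
  have h_affine := (gaussianReal_add_const (gaussianReal_const_mul hX_law a) b).map_eq
  exact gaussianReal_add_gaussianReal_of_indepFun
    (hXY.comp ((measurable_const_mul a).add_const b) measurable_id) h_affine hY

end ProbabilityTheory

theorem law_of_Yt_general (σ c T t : ℝ) (hσ : 0 < σ) (ht : 0 ≤ t)
    {Ω : Type*} [MeasureSpace Ω]
    (Y₀ G : Ω → ℝ)
    (hindep : IndepFun Y₀ G)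
    (hY₀ : Measure.map Y₀ ℙ =
      gaussianReal (-c * Real.exp (-σ * T))
        (Real.toNNReal (σ / (1 + Real.tanh (σ * T)))))
    (hG : Measure.map G ℙ =
      gaussianReal 0
        (Real.toNNReal (σ ^ 2 * Real.cosh (σ * (T - t)) ^ 2 *
          ∫ s in (0:ℝ)..t, 1 / Real.cosh (σ * (T - s)) ^ 2))) :
    Measure.map
        (fun ω =>
          Real.cosh (σ * (T - t)) / Real.cosh (σ * T) * Y₀ ω
            + c * Real.cosh (σ * (T - t)) *
                (Real.tanh (σ * (T - t)) - Real.tanh (σ * T))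
            + G ω) ℙ
      = gaussianReal (-c * Real.exp (-σ * (T - t)))
          (Real.toNNReal (σ / (1 + Real.tanh (σ * (T - t))))) := by
  rw [hindep.map_affine_add_eq_gaussianReal hY₀ hG, add_zero]
  have h_int_nonneg : 0 ≤ ∫ s in (0:ℝ)..t, 1 / cosh (σ * (T - s)) ^ 2 :=
    intervalIntegral.integral_nonneg ht fun s _ => by positivity
  rw [integral_one_div_cosh_sq_mul_sub hσ.ne', sub_zero] at h_int_nonneg ⊢
  congr 1
  · rw [neg_mul σ, neg_mul σ, exp_neg_eq_cosh_mul_one_sub_tanh, exp_neg_eq_cosh_mul_one_sub_tanh]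
    field_simp [(cosh_pos (σ * T)).ne']
    ring
  · apply NNReal.eq
    rw [NNReal.coe_add, NNReal.coe_mul, NNReal.coe_mk,
      coe_toNNReal _ (div_one_add_tanh_nonneg hσ.le _),
      coe_toNNReal _ (mul_nonneg (by positivity) h_int_nonneg),
      coe_toNNReal _ (div_one_add_tanh_nonneg hσ.le _), div_one_add_tanh, div_one_add_tanh]
    field_simp [(cosh_pos (σ * T)).ne']
    ring

theorem law_of_Yt (σ c T t : ℝ) (hσ : 0 < σ) (hT : 0 < T) (ht : 0 ≤ t) (htT : t ≤ T)
    {Ω : Type*} [MeasureSpace Ω] [IsProbabilityMeasure (ℙ : Measure Ω)]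
    (Y₀ G : Ω → ℝ) (hmeas₀ : Measurable Y₀) (hmeasG : Measurable G)
    (hindep : IndepFun Y₀ G)
    (hY₀ : Measure.map Y₀ ℙ =
      gaussianReal (-c * Real.exp (-σ * T))
        (Real.toNNReal (σ / (1 + Real.tanh (σ * T)))))
    (hG : Measure.map G ℙ =
      gaussianReal 0
        (Real.toNNReal (σ ^ 2 * Real.cosh (σ * (T - t)) ^ 2 *
          ∫ s in (0:ℝ)..t, 1 / Real.cosh (σ * (T - s)) ^ 2))) :
    Measure.map
        (fun ω =>
          Real.cosh (σ * (T - t)) / Real.cosh (σ * T) * Y₀ ω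
            + c * Real.cosh (σ * (T - t)) *
                (Real.tanh (σ * (T - t)) - Real.tanh (σ * T))
            + G ω) ℙ
      = gaussianReal (-c * Real.exp (-σ * (T - t)))
          (Real.toNNReal (σ / (1 + Real.tanh (σ * (T - t))))) :=
  law_of_Yt_general σ c T t hσ ht Y₀ G hindep hY₀ hG
end
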